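/- arXiv:alg-geom/9708014 — 2 statements merged into one kernel-verified Lean document; each statement's English description precedes it below -/
import Mathlib

section
/- Let E′ be an elementary transformation of E. Call E′ of k-type I if E admits a maximal rank-k subbundle F (i.e., with s_k(E,F) = s_k(E)) contained in E′, and of k-type II otherwise. Then s_k(E′) = s_k(E) − k if E′ is of k-type I, and s_k(E′) = s_k(E) + (r−k) if E′ is of k-type II. -/
/-- The set of values `k·deg E − rk E·deg F` over rank-`k` subbundles `F` of `E`;
its minimum is `s_k(E)`. -/
def sSet {B : Type*} (rk : B → ℕ) (deg : B → ℤ) (SubIn : B → B → Prop)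
    (k : ℕ) (E : B) : Set ℤ :=
  {n | ∃ F, SubIn F E ∧ rk F = k ∧ n = (k : ℤ) * deg E - (rk E : ℤ) * deg F}

/-- Proposition 1.6. `E' ≤ E` is an elementary transformation
(`rk E' = rk E = r`, `deg E' = deg E − 1`), `F ↦ F ⊓ E'` is a bijection from
rank-`k` subbundles of `E` to those of `E'`, changing `s_k(E,F)` by `−k` if
`F ≤ E'` (type I) and by `+(r−k)` otherwise (type II) — hypotheses `hI`, `hII`.
`m = s_k(E)` and `m' = s_k(E')` are the respective minima.
`E'` is of `k`-type I if some maximal rank-`k` subbundle of `E` is contained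
in `E'`.  Then `s_k(E') = s_k(E) − k` if `E'` is of `k`-type I, and
`s_k(E') = s_k(E) + (r−k)` otherwise. -/
theorem statement_7 {B : Type*} [Lattice B] (rk : B → ℕ) (deg : B → ℤ)
    (SubIn : B → B → Prop)
    (r k : ℕ) (hr : 2 ≤ r) (hk1 : 1 ≤ k) (hk2 : k ≤ r - 1)
    (E E' : B) (hle : E' ≤ E) (hrE : rk E = r) (hrE' : rk E' = r)
    (hdeg : deg E' = deg E - 1)
    (hbij : Set.BijOn (fun F => F ⊓ E')
      {F | SubIn F E ∧ rk F = k} {F' | SubIn F' E' ∧ rk F' = k})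
    (hI : ∀ F, SubIn F E → rk F = k → F ≤ E' →
      (k : ℤ) * deg E' - (r : ℤ) * deg (F ⊓ E')
        = ((k : ℤ) * deg E - (r : ℤ) * deg F) - k)
    (hII : ∀ F, SubIn F E → rk F = k → ¬ F ≤ E' →
      (k : ℤ) * deg E' - (r : ℤ) * deg (F ⊓ E')
        = ((k : ℤ) * deg E - (r : ℤ) * deg F) + ((r : ℤ) - k))
    (m m' : ℤ)
    (hm : IsLeast (sSet rk deg SubIn k E) m)
    (hm' : IsLeast (sSet rk deg SubIn k E') m') :
    ((∃ F, SubIn F E ∧ rk F = k ∧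
        (k : ℤ) * deg E - (r : ℤ) * deg F = m ∧ F ≤ E') →
      m' = m - k)
    ∧ (¬ (∃ F, SubIn F E ∧ rk F = k ∧
        (k : ℤ) * deg E - (r : ℤ) * deg F = m ∧ F ≤ E') →
      m' = m + ((r : ℤ) - k)) := by
  obtain ⟨hmS, hmlb⟩ := hm
  obtain ⟨hm'S, hm'lb⟩ := hm'
  obtain ⟨F0, hF0E, hF0k, hF0v⟩ := hmS
  rw [hrE] at hF0v
  -- k < r
  have hkr : (k : ℤ) < r := by
    have : k < r := lt_of_le_of_lt hk2 (Nat.sub_lt (by omega) one_pos)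
    exact_mod_cast this
  -- gap lemma: any element of sSet E is m or ≥ m + r
  have hgap : ∀ F, SubIn F E → rk F = k →
      (k : ℤ) * deg E - (r : ℤ) * deg F = m ∨
      m + r ≤ (k : ℤ) * deg E - (r : ℤ) * deg F := by
    intro F hFE hFk
    have hmem : (k : ℤ) * deg E - (r : ℤ) * deg F ∈ sSet rk deg SubIn k E := by
      exact ⟨F, hFE, hFk, by rw [hrE]⟩
    have hge := hmlb hmem
    have hd : (k : ℤ) * deg E - (r : ℤ) * deg F - m = r * (deg F0 - deg F) := by
      rw [hF0v]; ring
    rcases eq_or_lt_of_le hge with h | h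
    · exact Or.inl h.symm
    · right
      have hr0 : (0 : ℤ) < r := by omega
      have : (0 : ℤ) < r * (deg F0 - deg F) := by rw [← hd]; omega
      have h1 : (1 : ℤ) ≤ deg F0 - deg F := by
        by_contra hcon
        push_neg at hcon
        nlinarith
      nlinarith
  -- characterize elements of sSet E'
  have hchar : ∀ n' ∈ sSet rk deg SubIn k E', ∃ F, SubIn F E ∧ rk F = k ∧
      n' = (k : ℤ) * deg E' - (r : ℤ) * deg (F ⊓ E') := by
    intro n' hn'
    obtain ⟨F', hF'E', hF'k, hF'v⟩ := hn'
    obtain ⟨F, hF, hFeq⟩ := hbij.surjOn ⟨hF'E', hF'k⟩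
    exact ⟨F, hF.1, hF.2, by simp only at hFeq; rw [hrE'] at hF'v; rw [hF'v, hFeq]⟩
  -- membership of image values
  have hmemI : ∀ F, SubIn F E → rk F = k →
      (k : ℤ) * deg E' - (r : ℤ) * deg (F ⊓ E') ∈ sSet rk deg SubIn k E' := by
    intro F hFE hFk
    have h := hbij.mapsTo (show F ∈ {F | SubIn F E ∧ rk F = k} from ⟨hFE, hFk⟩)
    exact ⟨F ⊓ E', h.1, h.2, by rw [hrE']⟩
  constructor
  · rintro ⟨F, hFE, hFk, hFv, hFle⟩
    have hmem := hmemI F hFE hFk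
    rw [hI F hFE hFk hFle, hFv] at hmem
    have h1 : m' ≤ m - k := hm'lb hmem
    have h2 : m - k ≤ m' := by
      obtain ⟨G, hGE, hGk, hGv⟩ := hchar m' hm'S
      by_cases hGle : G ≤ E'
      · rw [hI G hGE hGk hGle] at hGv
        have := hmlb (⟨G, hGE, hGk, by rw [hrE]⟩ :
          (k : ℤ) * deg E - (r : ℤ) * deg G ∈ sSet rk deg SubIn k E)
        omega
      · rw [hII G hGE hGk hGle] at hGv
        have := hmlb (⟨G, hGE, hGk, by rw [hrE]⟩ :
          (k : ℤ) * deg E - (r : ℤ) * deg G ∈ sSet rk deg SubIn k E)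
        omega
    omega
  · intro hne
    have hF0nle : ¬ F0 ≤ E' := fun h => hne ⟨F0, hF0E, hF0k, hF0v.symm, h⟩
    have hmem := hmemI F0 hF0E hF0k
    rw [hII F0 hF0E hF0k hF0nle, ← hF0v] at hmem
    have h1 : m' ≤ m + ((r : ℤ) - k) := by
      have := hm'lb hmem
      omega
    have h2 : m + ((r : ℤ) - k) ≤ m' := by
      obtain ⟨G, hGE, hGk, hGv⟩ := hchar m' hm'S
      by_cases hGle : G ≤ E'
      · rw [hI G hGE hGk hGle] at hGv
        rcases hgap G hGE hGk with h | h
        · exact absurd ⟨G, hGE, hGk, h, hGle⟩ hne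
        · omega
      · rw [hII G hGE hGk hGle] at hGv
        have := hmlb (⟨G, hGE, hGk, by rw [hrE]⟩ :
          (k : ℤ) * deg E - (r : ℤ) * deg G ∈ sSet rk deg SubIn k E)
        omega
    omega
end

section
/- Let E′ be an elementary transformation of E of k-type II. Then the maximal rank-k subbundles of E′ are exactly the subbundles F′ = F ∩ E′ where F is a rank-k subbundle of E which is either maximal, or of degree one less than the maximal degree and contained in E′ (type I). -/
/-- Remark 1.7 (ii). `E' ≤ E` is an elementary transformation of
`k`-type II (hypothesis `htypeII`: no maximal rank-`k` subbundle of `E` is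
contained in `E'`); notation as in Statement 9.  Then the maximal rank-`k`
subbundles of `E'` are exactly the `F' = F ⊓ E'` where `F` is a rank-`k`
subbundle of `E` which is either maximal (`s_k(E,F) = m`), or of degree one
less than the maximal degree (`s_k(E,F) = m + r`) and contained in `E'`. -/
theorem statement_10 {B : Type*} [Lattice B] (rk : B → ℕ) (deg : B → ℤ)
    (SubIn : B → B → Prop)
    (r k : ℕ) (hr : 2 ≤ r) (hk1 : 1 ≤ k) (hk2 : k ≤ r - 1)
    (E E' : B) (hle : E' ≤ E) (hrE : rk E = r) (hrE' : rk E' = r)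
    (hdeg : deg E' = deg E - 1)
    (hbij : Set.BijOn (fun F => F ⊓ E')
      {F | SubIn F E ∧ rk F = k} {F' | SubIn F' E' ∧ rk F' = k})
    (hI : ∀ F, SubIn F E → rk F = k → F ≤ E' →
      (k : ℤ) * deg E' - (r : ℤ) * deg (F ⊓ E')
        = ((k : ℤ) * deg E - (r : ℤ) * deg F) - k)
    (hII : ∀ F, SubIn F E → rk F = k → ¬ F ≤ E' →
      (k : ℤ) * deg E' - (r : ℤ) * deg (F ⊓ E')
        = ((k : ℤ) * deg E - (r : ℤ) * deg F) + ((r : ℤ) - k))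
    (m m' : ℤ)
    (hm : IsLeast (sSet rk deg SubIn k E) m)
    (hm' : IsLeast (sSet rk deg SubIn k E') m')
    (htypeII : ¬ ∃ F, SubIn F E ∧ rk F = k ∧
      (k : ℤ) * deg E - (r : ℤ) * deg F = m ∧ F ≤ E') :
    {F' | SubIn F' E' ∧ rk F' = k ∧ (k : ℤ) * deg E' - (r : ℤ) * deg F' = m'}
      = (fun F => F ⊓ E') ''
        {F | SubIn F E ∧ rk F = k ∧
          ((k : ℤ) * deg E - (r : ℤ) * deg F = m ∨
            ((k : ℤ) * deg E - (r : ℤ) * deg F = m + r ∧ F ≤ E'))} := by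
  -- basic facts
  obtain ⟨F₀, hF₀E, hF₀k, hF₀m⟩ := hm.1
  rw [hrE] at hF₀m
  -- every F in the domain yields s-value ≥ m, and = m or ≥ m + r
  have hge : ∀ F, SubIn F E → rk F = k → m ≤ (k : ℤ) * deg E - (r : ℤ) * deg F := by
    intro F hFE hFk
    apply hm.2
    exact ⟨F, hFE, hFk, by rw [hrE]⟩
  have hstep : ∀ F, SubIn F E → rk F = k →
      (k : ℤ) * deg E - (r : ℤ) * deg F ≠ m →
      m + r ≤ (k : ℤ) * deg E - (r : ℤ) * deg F := by
    intro F hFE hFk hne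
    have h1 := hge F hFE hFk
    have hdvd : (r : ℤ) ∣ ((k : ℤ) * deg E - (r : ℤ) * deg F - m) := by
      refine ⟨deg F₀ - deg F, ?_⟩
      rw [hF₀m]; ring
    have hpos : 0 < (k : ℤ) * deg E - (r : ℤ) * deg F - m := by omega
    have := Int.le_of_dvd hpos hdvd
    omega
  -- key bound: all s-values in E' are ≥ m + (r - k)
  have key : ∀ F, SubIn F E → rk F = k →
      m + ((r : ℤ) - k) ≤ (k : ℤ) * deg E' - (r : ℤ) * deg (F ⊓ E') := by
    intro F hFE hFk
    by_cases h : F ≤ E'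
    · rw [hI F hFE hFk h]
      have hne : (k : ℤ) * deg E - (r : ℤ) * deg F ≠ m := by
        intro he; exact htypeII ⟨F, hFE, hFk, he, h⟩
      have := hstep F hFE hFk hne
      have hkr : (k : ℤ) ≤ r := by exact_mod_cast Nat.le_of_lt_succ (by omega)
      omega
    · rw [hII F hFE hFk h]
      have := hge F hFE hFk
      omega
  -- F₀ is not contained in E'
  have hF₀n : ¬ F₀ ≤ E' := fun h => htypeII ⟨F₀, hF₀E, hF₀k, hF₀m.symm, h⟩
  -- m' = m + (r - k)
  have hm'eq : m' = m + ((r : ℤ) - k) := by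
    have hle1 : m' ≤ m + ((r : ℤ) - k) := by
      apply hm'.2
      have hmem := hbij.mapsTo (show F₀ ∈ {F | SubIn F E ∧ rk F = k} from ⟨hF₀E, hF₀k⟩)
      refine ⟨F₀ ⊓ E', hmem.1, hmem.2, ?_⟩
      rw [hrE', hII F₀ hF₀E hF₀k hF₀n, ← hF₀m]
    have hle2 : m + ((r : ℤ) - k) ≤ m' := by
      obtain ⟨F', hF'E, hF'k, hF'm⟩ := hm'.1
      rw [hrE'] at hF'm
      obtain ⟨F, ⟨hFE, hFk⟩, hFeq⟩ := hbij.surjOn (show F' ∈ {F' | SubIn F' E' ∧ rk F' = k} from ⟨hF'E, hF'k⟩)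
      have := key F hFE hFk
      simp only at hFeq
      rw [hFeq] at this
      omega
    omega
  ext x
  simp only [Set.mem_setOf_eq, Set.mem_image]
  constructor
  · rintro ⟨hx1, hx2, hx3⟩
    obtain ⟨F, ⟨hFE, hFk⟩, hFeq⟩ := hbij.surjOn (show x ∈ {F' | SubIn F' E' ∧ rk F' = k} from ⟨hx1, hx2⟩)
    simp only at hFeq
    refine ⟨F, ⟨hFE, hFk, ?_⟩, hFeq⟩
    by_cases h : F ≤ E'
    · right
      refine ⟨?_, h⟩
      have := hI F hFE hFk h
      rw [hFeq, hx3, hm'eq] at this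
      omega
    · left
      have := hII F hFE hFk h
      rw [hFeq, hx3, hm'eq] at this
      omega
  · rintro ⟨F, ⟨hFE, hFk, hs⟩, rfl⟩
    have hmem := hbij.mapsTo (show F ∈ {F | SubIn F E ∧ rk F = k} from ⟨hFE, hFk⟩)
    refine ⟨hmem.1, hmem.2, ?_⟩
    rcases hs with hs | ⟨hs, hle'⟩
    · have hn : ¬ F ≤ E' := fun h => htypeII ⟨F, hFE, hFk, hs, h⟩
      rw [hII F hFE hFk hn, hs, hm'eq]
    · rw [hI F hFE hFk hle', hs, hm'eq]
      omega
end
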